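/- arXiv:2407.03164 — 5 statements merged into one kernel-verified Lean document; each statement's English description precedes it below -/
import Mathlib

section
/- Let J = diag(1,-1,1), A the 3×3 tridiagonal matrix with diagonal (a,-a,a) (a real), superdiagonal (b₁,b₂), subdiagonal (c₁,c₂). For θ ∈ ℝ define H_θ(A) = ((A + JA*J)/2) cos θ + ((A - JA*J)/(2i)) sin θ. Then det(H_θ(A) - zI₃) = -(z - a cos θ)(z² - p - q cos 2θ - t sin 2θ), where p = (Tr(JA*JA) - a²)/4, q = Re(a² + b₁c₁ + b₂c₂)/2, t = Im(b₁c₁ + b₂c₂)/2. -/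
open Matrix Complex Real
open scoped ComplexConjugate

/-!
Since `H_θ(A) = (e^{-iθ} A + e^{iθ} A^#) / 2` and `A^# = J A* J` flips the signs of the
off-diagonal entries of `A*`, the matrix `H_θ(A)` is again tridiagonal with diagonal
`(a cos θ, -a cos θ, a cos θ)`. Expanding along the first row, such a matrix has
characteristic determinant `-(z - d)(z² - d² - h₁₂h₂₁ - h₂₃h₃₂)`. Each product
`4 h_{k,k+1} h_{k+1,k}` equals `2 Re(e^{-2iθ} b_k c_k) - |b_k|² - |c_k|²`, and with
`cos² θ = (1 + cos 2θ)/2` the sum `d² + h₁₂h₂₁ + h₂₃h₃₂` collects into `p + q cos 2θ + t sin 2θ`.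
-/

lemma det_tridiag_sub_smul_one {R : Type*} [CommRing R] (d β₁ γ₁ β₂ γ₂ z : R) :
    (!![d, β₁, 0; γ₁, -d, β₂; 0, γ₂, d] - z • (1 : Matrix (Fin 3) (Fin 3) R)).det
      = -((z - d) * (z ^ 2 - (d ^ 2 + β₁ * γ₁ + β₂ * γ₂))) := by
  simp [det_fin_three]
  ring

lemma cos_smul_add_sin_smul {V : Type*} [AddCommGroup V] [Module ℂ V] (θ : ℝ) (M N : V) :
    (Real.cos θ : ℂ) • ((1 / 2 : ℂ) • (M + N)) + (Real.sin θ : ℂ) • ((1 / (2 * I)) • (M - N))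
      = (1 / 2 : ℂ) • (cexp (-(θ * I)) • M + cexp (θ * I) • N) := by
  have hI : (1 : ℂ) / (2 * I) = -I / 2 := by field_simp; simp
  rw [hI, ← neg_mul, Complex.exp_mul_I, Complex.exp_mul_I, Complex.cos_neg, Complex.sin_neg,
    ← Complex.ofReal_cos, ← Complex.ofReal_sin]
  module

lemma exp_neg_mul_I_mul_add_exp_mul_I_mul_conj (x : ℝ) (w : ℂ) :
    cexp (-(x * I)) * w + cexp (x * I) * conj w
      = 2 * (Real.cos x * w.re + Real.sin x * w.im) := by
  have : cexp (x * I) * conj w = conj (cexp (-(x * I)) * w) := by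
    rw [map_mul, ← Complex.exp_conj]; simp
  rw [this, Complex.add_conj]
  simp [Complex.exp_re, Complex.exp_im]

lemma offDiag_mul_offDiag (θ : ℝ) (b c : ℂ) :
    (cexp (-(θ * I)) * b - cexp (θ * I) * conj c)
        * (cexp (-(θ * I)) * c - cexp (θ * I) * conj b)
      = 2 * (Real.cos (2 * θ) * (b * c).re + Real.sin (2 * θ) * (b * c).im)
          - (conj b * b + conj c * c) := by
  have hrot := exp_neg_mul_I_mul_add_exp_mul_I_mul_conj (2 * θ) (b * c)
  have hunit : cexp (-(θ * I)) * cexp (θ * I) = 1 := by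
    rw [← Complex.exp_add]; simp
  have hsq_neg : cexp (-(θ * I)) * cexp (-(θ * I)) = cexp (-(↑(2 * θ) * I)) := by
    rw [← Complex.exp_add]; push_cast; ring_nf
  have hsq : cexp (θ * I) * cexp (θ * I) = cexp (↑(2 * θ) * I) := by
    rw [← Complex.exp_add]; push_cast; ring_nf
  rw [map_mul] at hrot
  linear_combination hrot - (conj b * b + conj c * c) * hunit
    + b * c * hsq_neg + conj b * conj c * hsq

lemma kreinAdjoint_tridiag (a : ℝ) (b₁ b₂ c₁ c₂ : ℂ) :
    !![1, 0, 0; 0, -1, 0; 0, 0, 1] * (!![(a : ℂ), b₁, 0; c₁, -(a : ℂ), b₂; 0, c₂, (a : ℂ)])ᴴ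
        * !![1, 0, 0; 0, -1, 0; 0, 0, 1]
      = !![(a : ℂ), -conj c₁, 0; -conj b₁, -(a : ℂ), -conj c₂; 0, -conj b₂, (a : ℂ)] := by
  ext i j
  fin_cases i <;> fin_cases j <;>
    simp [mul_apply, Fin.sum_univ_succ, vecMul, dotProduct, conjTranspose_apply]

lemma half_exp_smul_tridiag (a : ℝ) (b₁ b₂ c₁ c₂ : ℂ) (θ : ℝ) :
    (1 / 2 : ℂ) • (cexp (-(θ * I)) • !![(a : ℂ), b₁, 0; c₁, -(a : ℂ), b₂; 0, c₂, (a : ℂ)]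
        + cexp (θ * I)
          • !![(a : ℂ), -conj c₁, 0; -conj b₁, -(a : ℂ), -conj c₂; 0, -conj b₂, (a : ℂ)])
      = !![(a * Real.cos θ : ℂ),
            (cexp (-(θ * I)) * b₁ - cexp (θ * I) * conj c₁) / 2, 0;
          (cexp (-(θ * I)) * c₁ - cexp (θ * I) * conj b₁) / 2,
            -(a * Real.cos θ : ℂ),
            (cexp (-(θ * I)) * b₂ - cexp (θ * I) * conj c₂) / 2;
          0, (cexp (-(θ * I)) * c₂ - cexp (θ * I) * conj b₂) / 2,
            (a * Real.cos θ : ℂ)] := by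
  have hcos : (a * Real.cos θ : ℂ) = a * (cexp (-(θ * I)) + cexp (θ * I)) / 2 := by
    rw [Complex.ofReal_cos, Complex.cos, neg_mul, add_comm, mul_div_assoc]
  rw [hcos]
  ext i j
  fin_cases i <;> fin_cases j <;> simp <;> ring

theorem stmt2 (a : ℝ) (b₁ b₂ c₁ c₂ : ℂ)
    (A : Matrix (Fin 3) (Fin 3) ℂ)
    (hA : A = !![(a : ℂ), b₁, 0; c₁, -(a : ℂ), b₂; 0, c₂, (a : ℂ)])
    (J : Matrix (Fin 3) (Fin 3) ℂ)
    (hJ : J = !![1, 0, 0; 0, -1, 0; 0, 0, 1])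
    (θ : ℝ)
    (H : Matrix (Fin 3) (Fin 3) ℂ)
    (hH : H = (Real.cos θ : ℂ) • (((1:ℂ)/2) • (A + J * Aᴴ * J))
            + (Real.sin θ : ℂ) • ((1 / (2 * Complex.I)) • (A - J * Aᴴ * J)))
    (p q t : ℂ)
    (hp : p = (Matrix.trace (J * Aᴴ * J * A) - (a : ℂ)^2) / 4)
    (hq : q = ((((a : ℂ)^2 + b₁ * c₁ + b₂ * c₂).re : ℂ)) / 2)
    (ht : t = (((b₁ * c₁ + b₂ * c₂).im : ℂ)) / 2) :
    ∀ z : ℂ, (H - z • (1 : Matrix (Fin 3) (Fin 3) ℂ)).det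
      = -((z - (a : ℂ) * (Real.cos θ : ℂ))
          * (z^2 - p - q * (Real.cos (2*θ) : ℂ) - t * (Real.sin (2*θ) : ℂ))) := by
  intro z
  have hA' : J * Aᴴ * J
      = !![(a : ℂ), -conj c₁, 0; -conj b₁, -(a : ℂ), -conj c₂; 0, -conj b₂, (a : ℂ)] := by
    rw [hA, hJ]; exact kreinAdjoint_tridiag a b₁ b₂ c₁ c₂
  have htr : trace (J * Aᴴ * J * A)
      = 3 * (a : ℂ) ^ 2 - (conj b₁ * b₁ + conj c₁ * c₁ + conj b₂ * b₂ + conj c₂ * c₂) := by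
    rw [hA', hA]; simp [trace_fin_three]; ring
  have hre : (((a : ℂ) ^ 2 + b₁ * c₁ + b₂ * c₂).re : ℂ) = a ^ 2 + (b₁ * c₁).re + (b₂ * c₂).re := by
    simp [← Complex.ofReal_pow]
  have him : ((b₁ * c₁ + b₂ * c₂).im : ℂ) = (b₁ * c₁).im + (b₂ * c₂).im := by simp
  have hcos2 : (Real.cos (2 * θ) : ℂ) = 2 * (Real.cos θ : ℂ) ^ 2 - 1 := by
    rw [Real.cos_two_mul]; push_cast; ring
  rw [hH, cos_smul_add_sin_smul, hA', hA, half_exp_smul_tridiag, det_tridiag_sub_smul_one,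
    hp, hq, ht, htr, hre, him]
  linear_combination (z - a * Real.cos θ) / 4 * (offDiag_mul_offDiag θ b₁ c₁
    + offDiag_mul_offDiag θ b₂ c₂ - 2 * a ^ 2 * hcos2)
end

section
/- Let A be the 5×5 centrosymmetric tridiagonal matrix with diagonal (a,-a,a,-a,a) (a real), superdiagonal (b₁,b₂,b₃,b₄) and subdiagonal (b₄,b₃,b₂,b₁), J = diag(1,-1,1,-1,1), and Q = (√2/2)[[I₂,0,E₂],[0,√2,0],[-E₂,0,I₂]]. Then Q^# A Q (with Q^# = JQ*J) is block diagonal, equal to R ⊕ S where R = [[a, b₁],[b₄, -a]] and S = [[a, √2 b₃, 0],[√2 b₂, -a, b₄],[0, b₁, a]]. -/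
open Matrix Real Complex

set_option maxHeartbeats 2000000 in
theorem stmt7 (a : ℝ) (b₁ b₂ b₃ b₄ : ℂ)
    (A : Matrix (Fin 5) (Fin 5) ℂ)
    (hA : A = !![(a : ℂ), b₁, 0, 0, 0;
                 b₄, -(a : ℂ), b₂, 0, 0;
                 0, b₃, (a : ℂ), b₃, 0;
                 0, 0, b₂, -(a : ℂ), b₄;
                 0, 0, 0, b₁, (a : ℂ)])
    (J : Matrix (Fin 5) (Fin 5) ℂ)
    (hJ : J = Matrix.diagonal ![1, -1, 1, -1, 1])
    (Q : Matrix (Fin 5) (Fin 5) ℂ)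
    (hQ : Q = ((Real.sqrt 2 / 2 : ℝ) : ℂ) •
      !![1, 0, 0, 0, 1;
         0, 1, 0, 1, 0;
         0, 0, ((Real.sqrt 2 : ℝ) : ℂ), 0, 0;
         0, -1, 0, 1, 0;
         -1, 0, 0, 0, 1]) :
    J * Qᴴ * J * A * Q
      = !![(a : ℂ), b₁, 0, 0, 0;
           b₄, -(a : ℂ), 0, 0, 0;
           0, 0, (a : ℂ), ((Real.sqrt 2 : ℝ) : ℂ) * b₃, 0;
           0, 0, ((Real.sqrt 2 : ℝ) : ℂ) * b₂, -(a : ℂ), b₄;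
           0, 0, 0, b₁, (a : ℂ)] := by
  set t : ℂ := ((Real.sqrt 2 : ℝ) : ℂ) with ht
  have h2 : t * t = 2 := by
    rw [ht, ← Complex.ofReal_mul, Real.mul_self_sqrt (by norm_num)]; norm_num
  have h2' : t ^ 2 = 2 := by rw [sq, h2]
  have h3 : t ^ 3 = 2 * t := by rw [pow_succ, h2']
  have hconj : (starRingEnd ℂ) t = t := by rw [ht]; exact Complex.conj_ofReal _
  have hconj2 : (starRingEnd ℂ) 2 = 2 := by rw [map_ofNat]
  have h4 : t ^ 4 = 4 := by rw [show (4:ℕ)=2*2 from rfl, pow_mul, h2']; norm_num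
  have hc : ((Real.sqrt 2 / 2 : ℝ) : ℂ) = t / 2 := by rw [ht]; push_cast; ring
  have hB : J * Qᴴ * J =
      !![t/2, 0, 0, 0, -(t/2);
         0, t/2, 0, -(t/2), 0;
         0, 0, t*t/2, 0, 0;
         0, t/2, 0, t/2, 0;
         t/2, 0, 0, 0, t/2] := by
    subst hJ hQ
    rw [hc]
    ext i j
    fin_cases i <;> fin_cases j <;>
      simp [Matrix.mul_apply, Fin.sum_univ_five, Matrix.diagonal, Matrix.conjTranspose_apply,
        Matrix.smul_apply, Matrix.vecHead, Matrix.vecTail, ← ht, hconj, hconj2] <;> first | ring | rfl | simp [Matrix.vecHead, Matrix.vecTail]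
  have hBA : J * Qᴴ * J * A =
      !![t/2*(a:ℂ), t/2*b₁, 0, -(t/2*b₁), -(t/2*(a:ℂ));
         t/2*b₄, -(t/2*(a:ℂ)), 0, t/2*(a:ℂ), -(t/2*b₄);
         0, t*t/2*b₃, t*t/2*(a:ℂ), t*t/2*b₃, 0;
         t/2*b₄, -(t/2*(a:ℂ)), t*b₂, -(t/2*(a:ℂ)), t/2*b₄;
         t/2*(a:ℂ), t/2*b₁, 0, t/2*b₁, t/2*(a:ℂ)] := by
    rw [hB, hA]
    ext i j
    fin_cases i <;> fin_cases j <;>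
      simp [Matrix.mul_apply, Fin.sum_univ_five, Matrix.vecHead, Matrix.vecTail] <;> ring
  rw [hBA, hQ, hc]
  ext i j
  fin_cases i <;> fin_cases j <;>
    simp [Matrix.mul_apply, Fin.sum_univ_five, Matrix.smul_apply, Matrix.vecHead, Matrix.vecTail, ← ht] <;>
    ring_nf <;> try simp only [h2', h3, h4]
  all_goals try ring
  all_goals norm_num
end

section
/- Let A be the 5×5 centrosymmetric tridiagonal matrix with diagonal (a,-a,a,-a,a) (a real), superdiagonal (b₁,b₂,b₃,b₄), subdiagonal (b₄,b₃,b₂,b₁), and J = diag(1,-1,1,-1,1). Then the eigenvalues of A are a, ±√(a² + b₁b₄) and ±√(a² + b₁b₄ + 2b₂b₃); equivalently, det(A - λI₅) = -(λ - a)(λ² - Δ₁)(λ² - Δ₂) with Δ₁ = a² + b₁b₄ and Δ₂ = Δ₁ + 2b₂b₃. -/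
/-!
`A` commutes with the exchange matrix, so it preserves the space of vectors `(x, y, z, y, x)`
and the space of vectors `(x, y, 0, -y, -x)`. In the bases `e₀ + e₄, e₁ + e₃, e₂` and
`e₀ - e₄, e₁ - e₃` it acts on them by the blocks `[[a, b₁, 0], [b₄, -a, b₂], [0, 2b₃, a]]` and
`[[a, b₁], [b₄, -a]]`, whose characteristic polynomials are `(a - λ)(λ² - Δ₂)` and `λ² - Δ₁`.
-/

open Matrix

theorem Matrix.det_sub_smul_one_eq_of_mul_eq_mul {n R : Type*} [Fintype n] [DecidableEq n]
    [CommRing R] {A B P : Matrix n n R} (hP : IsUnit P.det) (h : A * P = P * B) (c : R) :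
    (A - c • 1).det = (B - c • 1).det := by
  have hA : A - c • 1 = P * (B - c • 1) * P⁻¹ := by
    rw [Matrix.mul_sub, Matrix.sub_mul, ← h, Matrix.mul_assoc, mul_nonsing_inv _ hP,
      Matrix.mul_one, Matrix.mul_smul, Matrix.mul_one, Matrix.smul_mul, mul_nonsing_inv _ hP]
  rw [hA, det_conj ((isUnit_iff_isUnit_det P).mpr hP)]

theorem Matrix.det_fromBlocks_sub_smul_one {m n R : Type*} [Fintype m] [Fintype n]
    [DecidableEq m] [DecidableEq n] [CommRing R] (C : Matrix m m R) (D : Matrix n n R) (c : R) :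
    (fromBlocks C 0 0 D - c • 1).det = (C - c • 1).det * (D - c • 1).det := by
  simp only [← fromBlocks_one, fromBlocks_smul, sub_eq_add_neg, fromBlocks_neg, fromBlocks_add,
    smul_zero, neg_zero, add_zero, det_fromBlocks_zero₂₁]

theorem Matrix.det_sub_smul_one_of_reindex_eq_fromBlocks {l m n R : Type*} [Fintype l]
    [Fintype m] [Fintype n] [DecidableEq l] [DecidableEq m] [DecidableEq n] [CommRing R]
    {B : Matrix l l R} {C : Matrix m m R} {D : Matrix n n R} (e : l ≃ m ⊕ n)
    (h : reindex e e B = fromBlocks C 0 0 D) (c : R) :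
    (B - c • 1).det = (C - c • 1).det * (D - c • 1).det := by
  rw [← det_fromBlocks_sub_smul_one, ← h, ← det_reindex_self e, ← coe_reindexAlgEquiv R R,
    map_sub, map_smul, map_one]

section CentroTridiag

variable {K : Type*} [Field K]

def centroTridiag (a b₁ b₂ b₃ b₄ : K) : Matrix (Fin 5) (Fin 5) K :=
  !![a, b₁, 0, 0, 0;
     b₄, -a, b₂, 0, 0;
     0, b₃, a, b₃, 0;
     0, 0, b₂, -a, b₄;
     0, 0, 0, b₁, a]

def centroBasis : Matrix (Fin 5) (Fin 5) K :=
  !![1, 0, 0, 1, 0;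
     0, 1, 0, 0, 1;
     0, 0, 1, 0, 0;
     0, 1, 0, 0, -1;
     1, 0, 0, -1, 0]

def centroSymmBlock (a b₁ b₂ b₃ b₄ : K) : Matrix (Fin 3) (Fin 3) K :=
  !![a, b₁, 0;
     b₄, -a, b₂;
     0, 2 * b₃, a]

def centroSkewBlock (a b₁ b₄ : K) : Matrix (Fin 2) (Fin 2) K :=
  !![a, b₁;
     b₄, -a]

def centroTridiagBlocks (a b₁ b₂ b₃ b₄ : K) : Matrix (Fin 5) (Fin 5) K :=
  !![a, b₁, 0, 0, 0;
     b₄, -a, b₂, 0, 0;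
     0, 2 * b₃, a, 0, 0;
     0, 0, 0, a, b₁;
     0, 0, 0, b₄, -a]

theorem det_centroBasis : (centroBasis : Matrix (Fin 5) (Fin 5) K).det = -4 := by
  simp [centroBasis, det_succ_row_zero, Fin.sum_univ_succ, Fin.succAbove]
  norm_num

theorem centroTridiag_mul_centroBasis (a b₁ b₂ b₃ b₄ : K) :
    centroTridiag a b₁ b₂ b₃ b₄ * centroBasis =
      centroBasis * centroTridiagBlocks a b₁ b₂ b₃ b₄ := by
  ext i j
  fin_cases i <;> fin_cases j <;>
    simp [centroTridiag, centroBasis, centroTridiagBlocks, Matrix.mul_apply, Fin.sum_univ_succ]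
  all_goals ring

theorem reindex_centroTridiagBlocks (a b₁ b₂ b₃ b₄ : K) :
    reindex finSumFinEquiv.symm finSumFinEquiv.symm (centroTridiagBlocks a b₁ b₂ b₃ b₄) =
      fromBlocks (centroSymmBlock a b₁ b₂ b₃ b₄) 0 0 (centroSkewBlock a b₁ b₄) := by
  ext (i | i) (j | j) <;> fin_cases i <;> fin_cases j <;> rfl

theorem det_centroSymmBlock_sub_smul_one (a b₁ b₂ b₃ b₄ c : K) :
    (centroSymmBlock a b₁ b₂ b₃ b₄ - c • 1).det =
      (a - c) * (c ^ 2 - (a ^ 2 + b₁ * b₄ + 2 * b₂ * b₃)) := by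
  simp only [centroSymmBlock, det_fin_three, Matrix.sub_apply, Matrix.smul_apply, of_apply,
    cons_val', cons_val_zero, cons_val_one, cons_val, cons_val_fin_one, one_apply_eq, one_apply_ne,
    smul_eq_mul, ne_eq, Fin.reduceEq, not_false_eq_true, mul_one, mul_zero, sub_zero]
  ring

theorem det_centroSkewBlock_sub_smul_one (a b₁ b₄ c : K) :
    (centroSkewBlock a b₁ b₄ - c • 1).det = c ^ 2 - (a ^ 2 + b₁ * b₄) := by
  simp only [centroSkewBlock, det_fin_two, Matrix.sub_apply, Matrix.smul_apply, of_apply,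
    cons_val', cons_val_zero, cons_val_one, cons_val_fin_one, one_apply_eq, one_apply_ne,
    smul_eq_mul, ne_eq, Fin.reduceEq, not_false_eq_true, mul_one, mul_zero, sub_zero]
  ring

theorem det_centroTridiag_sub_smul_one [NeZero (2 : K)] (a b₁ b₂ b₃ b₄ c : K) :
    (centroTridiag a b₁ b₂ b₃ b₄ - c • 1).det =
      -((c - a) * (c ^ 2 - (a ^ 2 + b₁ * b₄)) *
        (c ^ 2 - (a ^ 2 + b₁ * b₄ + 2 * b₂ * b₃))) := by
  have hP : IsUnit (centroBasis : Matrix (Fin 5) (Fin 5) K).det := by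
    rw [det_centroBasis, show (4 : K) = 2 * 2 by norm_num]
    exact (neg_ne_zero.mpr (mul_ne_zero two_ne_zero two_ne_zero)).isUnit
  rw [det_sub_smul_one_eq_of_mul_eq_mul hP (centroTridiag_mul_centroBasis a b₁ b₂ b₃ b₄),
    det_sub_smul_one_of_reindex_eq_fromBlocks _ (reindex_centroTridiagBlocks a b₁ b₂ b₃ b₄),
    det_centroSymmBlock_sub_smul_one, det_centroSkewBlock_sub_smul_one]
  ring

end CentroTridiag

theorem stmt9 (a : ℝ) (b₁ b₂ b₃ b₄ : ℂ)
    (A : Matrix (Fin 5) (Fin 5) ℂ)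
    (hA : A = !![(a : ℂ), b₁, 0, 0, 0;
                 b₄, -(a : ℂ), b₂, 0, 0;
                 0, b₃, (a : ℂ), b₃, 0;
                 0, 0, b₂, -(a : ℂ), b₄;
                 0, 0, 0, b₁, (a : ℂ)])
    (Δ₁ Δ₂ : ℂ)
    (hΔ₁ : Δ₁ = (a : ℂ)^2 + b₁ * b₄)
    (hΔ₂ : Δ₂ = Δ₁ + 2 * b₂ * b₃) :
    ∀ lam : ℂ, (A - lam • (1 : Matrix (Fin 5) (Fin 5) ℂ)).det
      = -((lam - a) * (lam^2 - Δ₁) * (lam^2 - Δ₂)) := by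
  intro lam
  subst hA hΔ₂ hΔ₁
  exact det_centroTridiag_sub_smul_one (a : ℂ) b₁ b₂ b₃ b₄ lam
end

section
/- Let A be the 4×4 centrosymmetric tridiagonal matrix with diagonal (a,-a,-a,a) (a real), superdiagonal (b₁,b₂,b₃), subdiagonal (b₃,b₂,b₁), J = diag(1,-1,-1,1), and Q = (√2/2)[[I₂,E₂],[-E₂,I₂]]. Then Q^# A Q = JQ*JAQ is the block diagonal matrix [[a,b₁,0,0],[b₃,-b₂-a,0,0],[0,0,b₂-a,b₃],[0,0,b₁,a]]. -/
open Matrix Real Complex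

/- Up to the factor `√2/2`, `Q` is `P = [[I₂, E₂], [-E₂, I₂]]` (`blockRotation`). `P` commutes with
`J`, so `Q^# = Qᴴ`, and the claim reduces to the integer computation `Pᴴ A P = 2 D` together with
`(√2/2)² = 1/2`. -/

lemma conjTranspose_ofReal_smul_sandwich {n : Type*} [Fintype n] (c : ℝ)
    (J A P : Matrix n n ℂ) :
    J * ((c : ℂ) • P)ᴴ * J * A * ((c : ℂ) • P) = ((c * c : ℝ) : ℂ) • (J * Pᴴ * J * A * P) := by
  rw [conjTranspose_smul, star_def, conj_ofReal, ofReal_mul, mul_smul]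
  simp only [Matrix.mul_smul, Matrix.smul_mul]

lemma sqrt_two_div_two_mul_self : Real.sqrt 2 / 2 * (Real.sqrt 2 / 2) = 1 / 2 := by
  rw [div_mul_div_comm, Real.mul_self_sqrt zero_le_two]
  norm_num

def blockRotation : Matrix (Fin 4) (Fin 4) ℂ :=
  !![1, 0, 0, 1;
     0, 1, 1, 0;
     0, -1, 1, 0;
     -1, 0, 0, 1]

lemma diagonal_mul_conjTranspose_blockRotation_mul_diagonal :
    diagonal ![1, -1, -1, 1] * blockRotationᴴ * diagonal ![1, -1, -1, 1] = blockRotationᴴ := by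
  ext i j
  fin_cases i <;> fin_cases j <;> simp [blockRotation, Matrix.mul_apply, Fin.sum_univ_four]

lemma conjTranspose_blockRotation_mul_mul_blockRotation (a : ℝ) (b₁ b₂ b₃ : ℂ) :
    blockRotationᴴ * !![(a : ℂ), b₁, 0, 0;
                        b₃, -(a : ℂ), b₂, 0;
                        0, b₂, -(a : ℂ), b₃;
                        0, 0, b₁, (a : ℂ)] * blockRotation
      = (2 : ℂ) • !![(a : ℂ), b₁, 0, 0;
                     b₃, -b₂ - (a : ℂ), 0, 0;
                     0, 0, b₂ - (a : ℂ), b₃;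
                     0, 0, b₁, (a : ℂ)] := by
  ext i j
  fin_cases i <;> fin_cases j <;>
    simp [blockRotation, Matrix.mul_apply, Fin.sum_univ_four] <;> ring

theorem stmt12 (a : ℝ) (b₁ b₂ b₃ : ℂ)
    (A : Matrix (Fin 4) (Fin 4) ℂ)
    (hA : A = !![(a : ℂ), b₁, 0, 0;
                 b₃, -(a : ℂ), b₂, 0;
                 0, b₂, -(a : ℂ), b₃;
                 0, 0, b₁, (a : ℂ)])
    (J : Matrix (Fin 4) (Fin 4) ℂ)
    (hJ : J = Matrix.diagonal ![1, -1, -1, 1])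
    (Q : Matrix (Fin 4) (Fin 4) ℂ)
    (hQ : Q = ((Real.sqrt 2 / 2 : ℝ) : ℂ) •
      !![1, 0, 0, 1;
         0, 1, 1, 0;
         0, -1, 1, 0;
         -1, 0, 0, 1]) :
    J * Qᴴ * J * A * Q
      = !![(a : ℂ), b₁, 0, 0;
           b₃, -b₂ - (a : ℂ), 0, 0;
           0, 0, b₂ - (a : ℂ), b₃;
           0, 0, b₁, (a : ℂ)] := by
  subst hA hJ hQ
  rw [← blockRotation, conjTranspose_ofReal_smul_sandwich,
    diagonal_mul_conjTranspose_blockRotation_mul_diagonal,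
    conjTranspose_blockRotation_mul_mul_blockRotation, smul_smul, sqrt_two_div_two_mul_self]
  norm_num
end

section
/- Let A be the 4×4 centrosymmetric tridiagonal matrix with diagonal (a,-a,-a,a) (a real), superdiagonal (b₁,b₂,b₃), subdiagonal (b₃,b₂,b₁). Then the eigenvalues of A are b₂/2 ± √(Δ₊) and -b₂/2 ± √(Δ₋), where Δ± = a² + b₁b₃ ∓ a b₂ + b₂²/4; equivalently det(A - λI₄) = ((λ - b₂/2)² - Δ₊)((λ + b₂/2)² - Δ₋). -/
open Matrix Complex

/- Centrosymmetry splits the matrix, in the basis `eᵢ ± e₅₋ᵢ`, into the two `2 × 2` blocks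
`!![d₁, b₁; b₃, d₂ ± b₂]`; the determinant is the product of theirs. -/
theorem det_centrosymm_tridiag_fin_four {R : Type*} [CommRing R] (d₁ d₂ b₁ b₂ b₃ : R) :
    (!![d₁, b₁, 0, 0; b₃, d₂, b₂, 0; 0, b₂, d₂, b₃; 0, 0, b₁, d₁] : Matrix (Fin 4) (Fin 4) R).det
      = (d₁ * (d₂ + b₂) - b₁ * b₃) * (d₁ * (d₂ - b₂) - b₁ * b₃) := by
  simp [det_succ_row_zero, Fin.sum_univ_succ, Fin.succAbove]
  ring

theorem stmt13 (a : ℝ) (b₁ b₂ b₃ : ℂ)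
    (A : Matrix (Fin 4) (Fin 4) ℂ)
    (hA : A = !![(a : ℂ), b₁, 0, 0;
                 b₃, -(a : ℂ), b₂, 0;
                 0, b₂, -(a : ℂ), b₃;
                 0, 0, b₁, (a : ℂ)])
    (Δp Δm : ℂ)
    (hΔp : Δp = (a : ℂ)^2 + b₁ * b₃ - (a : ℂ) * b₂ + b₂^2 / 4)
    (hΔm : Δm = (a : ℂ)^2 + b₁ * b₃ + (a : ℂ) * b₂ + b₂^2 / 4) :
    ∀ lam : ℂ, (A - lam • (1 : Matrix (Fin 4) (Fin 4) ℂ)).det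
      = ((lam - b₂ / 2)^2 - Δp) * ((lam + b₂ / 2)^2 - Δm) := by
  intro lam
  subst hΔp hΔm
  have hshift : A - lam • (1 : Matrix (Fin 4) (Fin 4) ℂ) = !![(a : ℂ) - lam, b₁, 0, 0;
      b₃, -(a : ℂ) - lam, b₂, 0; 0, b₂, -(a : ℂ) - lam, b₃; 0, 0, b₁, (a : ℂ) - lam] := by
    rw [hA]
    ext i j
    fin_cases i <;> fin_cases j <;> simp [one_apply]
  rw [hshift, det_centrosymm_tridiag_fin_four]
  ring
end
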